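/- For n > 0, the geometric polynomial has the explicit formula w_n(y) = y · ∑_{k=1}^{n} S(n,k) (-1)^{n+k} k! (y+1)^{k-1}. -/

import Mathlib

/-!
Put `g_n = (1 + y) w_n(y)`. The recurrence of the Stirling numbers says `w_{n+1} = y (d/dy) g_n`,
hence `g_{n+1} = θ g_n` with `θ = y (1 + y) d/dy`. The reflection `y ↦ -1 - y` fixes `y (1 + y)`
and reverses `d/dy`, so it anticommutes with `θ`; as `g_1 = y (1 + y)` is invariant, `g_n` is
multiplied by `(-1)^(n+1)` under the reflection for `n ≥ 1`. Written out, this is the claimed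
formula multiplied by `1 + y`, a monic polynomial and therefore cancellable in `R[X]`.
-/

def stirling2 : ℕ → ℕ → ℕ
  | 0, 0 => 1
  | 0, _ + 1 => 0
  | _ + 1, 0 => 0
  | n + 1, k + 1 => (k + 1) * stirling2 n (k + 1) + stirling2 n k

/-- The geometric polynomials `w_n(y) = ∑_{k=0}^n S(n,k)·k!·y^k`. -/
def geomPoly (n : ℕ) (y : ℝ) : ℝ :=
  ∑ k ∈ Finset.range (n + 1), (stirling2 n k : ℝ) * (Nat.factorial k : ℝ) * y ^ k

open Polynomial Finset Nat

theorem stirling2_eq_stirlingSecond : stirling2 = stirlingSecond := by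
  funext n k
  induction n generalizing k with
  | zero => cases k <;> rfl
  | succ n ih =>
    cases k with
    | zero => rfl
    | succ k => rw [stirling2, stirlingSecond_succ_succ, ih, ih]

noncomputable def geomPolynomial (R : Type*) [Semiring R] (n : ℕ) : R[X] :=
  ∑ k ∈ range (n + 1), C (stirlingSecond n k * k ! : R) * X ^ k

section CommSemiring

variable (R : Type*) [CommSemiring R]

theorem coeff_geomPolynomial (n k : ℕ) :
    (geomPolynomial R n).coeff k = stirlingSecond n k * k ! := by
  simp only [geomPolynomial, finsetSum_coeff, coeff_C_mul_X_pow, sum_ite_eq, mem_range]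
  split_ifs with hk
  · rfl
  · simp [stirlingSecond_eq_zero_of_lt (by omega : n < k)]

theorem geomPolynomial_succ (n : ℕ) :
    geomPolynomial R (n + 1) = X * derivative ((X + 1) * geomPolynomial R n) := by
  ext (_ | k)
  · simp [coeff_geomPolynomial]
  · rw [coeff_X_mul, coeff_derivative, add_mul, one_mul, coeff_add, coeff_X_mul,
      coeff_geomPolynomial, coeff_geomPolynomial, coeff_geomPolynomial, stirlingSecond_succ_succ,
      factorial_succ]
    push_cast
    ring

theorem geomPolynomial_one : geomPolynomial R 1 = X := by
  simp [geomPolynomial, sum_range_succ, stirlingSecond_self]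

end CommSemiring

section CommRing

variable {R : Type*} [CommRing R]

theorem X_mul_X_add_one_mul_derivative_comp_neg_X_sub_one (p : R[X]) :
    (X * (X + 1) * derivative p).comp (-X - 1)
      = -(X * (X + 1) * derivative (p.comp (-X - 1))) := by
  simp only [mul_comp, X_comp, add_comp, one_comp, derivative_comp, derivative_sub, derivative_neg,
    derivative_X, derivative_one]
  ring

variable (R)

theorem X_add_one_mul_geomPolynomial_comp_neg_X_sub_one (n : ℕ) :
    ((X + 1) * geomPolynomial R (n + 1)).comp (-X - 1)
      = (-1) ^ n * ((X + 1) * geomPolynomial R (n + 1)) := by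
  induction n with
  | zero =>
    simp only [zero_add, geomPolynomial_one, mul_comp, add_comp, X_comp, one_comp]
    ring
  | succ n ih =>
    have hrec : (X + 1) * geomPolynomial R (n + 2)
        = X * (X + 1) * derivative ((X + 1) * geomPolynomial R (n + 1)) := by
      rw [geomPolynomial_succ]; ring
    rw [hrec, X_mul_X_add_one_mul_derivative_comp_neg_X_sub_one, ih, derivative_mul, derivative_pow,
      derivative_neg, derivative_one]
    ring

theorem X_add_one_mul_geomPolynomial {n : ℕ} (hn : n ≠ 0) :
    (X + 1) * geomPolynomial R n = (-1) ^ n * X * (geomPolynomial R n).comp (-X - 1) := by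
  obtain ⟨n, rfl⟩ := exists_eq_add_one_of_ne_zero hn
  have hsymm := X_add_one_mul_geomPolynomial_comp_neg_X_sub_one R n
  have hsq : ((-1 : R[X]) ^ n) * (-1) ^ n = 1 := by rw [← pow_add, Even.neg_one_pow ⟨n, rfl⟩]
  simp only [mul_comp, add_comp, X_comp, one_comp] at hsymm
  linear_combination (-(-1) ^ n) * hsymm - (X + 1) * geomPolynomial R (n + 1) * hsq

theorem geomPolynomial_eq_X_mul_sum {n : ℕ} (hn : n ≠ 0) :
    geomPolynomial R n = X * ∑ k ∈ Icc 1 n,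
      (stirlingSecond n k : R[X]) * (-1) ^ (n + k) * (k ! : R[X]) * (X + 1) ^ (k - 1) := by
  apply (monic_X_add_C (1 : R)).isRegular.left
  dsimp only
  have h0 : stirlingSecond n 0 = 0 := by
    obtain ⟨m, rfl⟩ := exists_eq_add_one_of_ne_zero hn
    rfl
  rw [C_1, X_add_one_mul_geomPolynomial R hn, geomPolynomial, Polynomial.sum_comp, range_eq_Ico,
    sum_eq_sum_Ico_succ_bot (succ_pos n), ← Ico_add_one_right_eq_Icc, h0]
  simp only [cast_zero, zero_mul, map_zero, zero_comp, zero_add, succ_eq_add_one, mul_sum]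
  refine sum_congr rfl fun k hk => ?_
  have hk0 : k ≠ 0 := by grind
  rw [show (-X - 1 : R[X]) = -(X + 1) by ring, mul_comp, C_comp, X_pow_comp,
    neg_pow (X + 1 : R[X]), C_mul, C_eq_natCast, C_eq_natCast]
  linear_combination (-1) ^ n * X * (stirlingSecond n k * k ! : R[X]) * (-1) ^ k *
    (mul_pow_sub_one hk0 (X + 1 : R[X])).symm

end CommRing

theorem eval_geomPolynomial (n : ℕ) (y : ℝ) : (geomPolynomial ℝ n).eval y = geomPoly n y := by
  simp [geomPolynomial, geomPoly, eval_finsetSum, stirling2_eq_stirlingSecond]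

theorem geomPoly_explicit (n : ℕ) (hn : 0 < n) (y : ℝ) :
    geomPoly n y
      = y * ∑ k ∈ Finset.Icc 1 n,
          (stirling2 n k : ℝ) * (-1) ^ (n + k) * (Nat.factorial k : ℝ) * (y + 1) ^ (k - 1) := by
  rw [← eval_geomPolynomial, geomPolynomial_eq_X_mul_sum ℝ hn.ne', stirling2_eq_stirlingSecond]
  simp [eval_finsetSum]
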